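/- arXiv:1405.1484 — 2 statements merged into one kernel-verified Lean document; each statement's English description precedes it below -/
import Mathlib

section
/- Let n ≥ 3 be a prime and let G be the graph of Construction 1. Fix l ∈ [n] and consider the family 𝓕_l consisting of the n² vertex sets N_G(w) ∩ P^l for w ∈ Q and N_G(s) ∩ P^l for s ∈ S. Then each member of 𝓕_l has exactly n vertices and induces a complete graph K_n in G², and any two distinct members of 𝓕_l intersect in at most one vertex (so the corresponding cliques of G² are pairwise edge-disjoint). -/
open SimpleGraph

/-- Entry of the Latin square `L_i`:  `L_i(j,k) ≡ j + i·(k-1) (mod n)`, with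
indices and entries taken in `ZMod n` (identifying `[n] = {1,…,n}` with `ZMod n`). -/
def latinL (n : ℕ) (i j k : ZMod n) : ZMod n := j + i * (k - 1)

/-- The vertices of the graph `G` of Construction 1:
`pv k m l` is `v_{k,m}^l ∈ P`, `qv i j` is `w_{i,j} ∈ Q` (with `i ≠ 0`, i.e. `i ∈ [n-1]`),
`rv i j` is `u_{i,j} ∈ R`, and `sv m` is `s_m ∈ S`. -/
inductive Vert (n : ℕ) : Type
  | pv (k m l : ZMod n) : Vert n
  | qv (i : {x : ZMod n // x ≠ 0}) (j : ZMod n) : Vert n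
  | rv (i : {x : ZMod n // x ≠ 0}) (j : ZMod n) : Vert n
  | sv (m : ZMod n) : Vert n

/-- One-directional description of the edges of Construction 1:
`w_{i,j}` is adjacent to `v_{k, L_i(j,k)}^l` for all `k, l`;
`u_{i,j}` is adjacent to every vertex of `T_{l, L_i(j,l)}` for every `l`;
`s_m` is adjacent to every vertex of `T_{l,m}` for every `l`. -/
def rel {n : ℕ} : Vert n → Vert n → Prop
  | .qv i j, .pv k m _ => m = latinL n i.1 j k
  | .rv i j, .pv _ m l => m = latinL n i.1 j l
  | .sv m', .pv _ m _ => m = m'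
  | _, _ => False

/-- The bipartite graph `G` of Construction 1. -/
def GraphG (n : ℕ) : SimpleGraph (Vert n) where
  Adj x y := rel x y ∨ rel y x
  symm := ⟨fun _ _ h => h.symm⟩
  loopless := by constructor; intro x h; cases x <;> simp [rel] at h

/-- The square `G²` of a graph `G`: two distinct vertices are adjacent iff
their distance in `G` is at most 2 (i.e. they are adjacent or have a common neighbor). -/
def square {V : Type*} (G : SimpleGraph V) : SimpleGraph V where
  Adj x y := x ≠ y ∧ (G.Adj x y ∨ ∃ z, G.Adj x z ∧ G.Adj z y)
  symm := by
    constructor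
    rintro x y ⟨hxy, h | ⟨z, h1, h2⟩⟩
    · exact ⟨hxy.symm, Or.inl h.symm⟩
    · exact ⟨hxy.symm, Or.inr ⟨z, h2.symm, h1.symm⟩⟩
  loopless := ⟨fun x h => h.1 rfl⟩

/-- `P_k^l = {v_{k,1}^l, …, v_{k,n}^l}`. -/
def Pkl (n : ℕ) (k l : ZMod n) : Set (Vert n) := {x | ∃ m, x = Vert.pv k m l}

/-- `P^l = P_1^l ∪ ⋯ ∪ P_n^l`. -/
def PlSet (n : ℕ) (l : ZMod n) : Set (Vert n) := {x | ∃ k m, x = Vert.pv k m l}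

/-- `P = P^1 ∪ ⋯ ∪ P^n`. -/
def Pset (n : ℕ) : Set (Vert n) := {x | ∃ k m l, x = Vert.pv k m l}

/-- `T_{l,m} = {v_{1,m}^l, …, v_{n,m}^l}`. -/
def Tlm (n : ℕ) (l m : ZMod n) : Set (Vert n) := {x | ∃ k, x = Vert.pv k m l}

/-- `Q_i = {w_{i,1}, …, w_{i,n}}`. -/
def QiSet (n : ℕ) (i : {x : ZMod n // x ≠ 0}) : Set (Vert n) := {x | ∃ j, x = Vert.qv i j}

/-- `Q = Q_1 ∪ ⋯ ∪ Q_{n-1}`. -/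
def Qset (n : ℕ) : Set (Vert n) := {x | ∃ i j, x = Vert.qv i j}

/-- `R_i = {u_{i,1}, …, u_{i,n}}`. -/
def RiSet (n : ℕ) (i : {x : ZMod n // x ≠ 0}) : Set (Vert n) := {x | ∃ j, x = Vert.rv i j}

/-- `R = R_1 ∪ ⋯ ∪ R_{n-1}`. -/
def Rset (n : ℕ) : Set (Vert n) := {x | ∃ i j, x = Vert.rv i j}

/-- `S = {s_1, …, s_n}`. -/
def Sset (n : ℕ) : Set (Vert n) := {x | ∃ m, x = Vert.sv m}

/-- `G_l`, the subgraph of `G` induced by `P^l ∪ Q` (kept on the same vertex type: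
all edges of `G` with both endpoints in `P^l ∪ Q`). -/
def Gl (n : ℕ) (l : ZMod n) : SimpleGraph (Vert n) where
  Adj x y := (GraphG n).Adj x y ∧ x ∈ PlSet n l ∪ Qset n ∧ y ∈ PlSet n l ∪ Qset n
  symm := ⟨fun _ _ ⟨h, hx, hy⟩ => ⟨h.symm, hy, hx⟩⟩
  loopless := ⟨fun x h => (GraphG n).loopless.irrefl x h.1⟩

/-- `G` is `k`-choosable: for every list assignment with all lists of size at least `k`
there is a proper coloring choosing each color from the corresponding list. -/
def Choosable {V : Type*} (G : SimpleGraph V) (k : ℕ) : Prop :=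
  ∀ L : V → Finset ℕ, (∀ v, k ≤ (L v).card) →
    ∃ φ : V → ℕ, (∀ v, φ v ∈ L v) ∧ ∀ ⦃v w⦄, G.Adj v w → φ v ≠ φ w

/-- The list chromatic number `χ_ℓ(G)`: the least `k` such that `G` is `k`-choosable. -/
noncomputable def listChromaticNumber {V : Type*} (G : SimpleGraph V) : ℕ :=
  sInf {k | Choosable G k}

/-!
Over the field `ZMod n`, `N_G(x) ∩ P^l` for `x ∈ Q ∪ S` is the graph `{v_{k, a k + b}^l}` of an
affine map, with distinct vertices `x` giving distinct maps `(a, b)`; two distinct affine maps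
agree at most once, so two such graphs share at most one vertex. Each graph meets every `P_k^l`
once, so it has `n` vertices, and they are pairwise at distance 2 through `x`.
-/

def layerGraph {n : ℕ} (l : ZMod n) (f : ZMod n → ZMod n) : Set (Vert n) :=
  Set.range fun k => Vert.pv k (f k) l

lemma ncard_layerGraph {n : ℕ} [NeZero n] (l : ZMod n) (f : ZMod n → ZMod n) :
    (layerGraph l f).ncard = n := by
  rw [layerGraph, Set.ncard_range_of_injective, Nat.card_zmod]
  intro k k' h
  cases h
  rfl

lemma layerGraph_inter_subsingleton {n : ℕ} {l : ZMod n} {f g : ZMod n → ZMod n}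
    (h : {k | f k = g k}.Subsingleton) : (layerGraph l f ∩ layerGraph l g).Subsingleton := by
  rintro _ ⟨⟨k, rfl⟩, ⟨k₁, hk₁⟩⟩ _ ⟨⟨k', rfl⟩, ⟨k₂, hk₂⟩⟩
  obtain ⟨rfl, hfg, -⟩ := Vert.pv.inj hk₁
  obtain ⟨rfl, hfg', -⟩ := Vert.pv.inj hk₂
  rw [h hfg.symm hfg'.symm]

lemma subsingleton_setOf_affine_eq {R : Type*} [CommRing R] [IsDomain R] {a b a' b' : R}
    (h : (a, b) ≠ (a', b')) : {k | a * k + b = a' * k + b'}.Subsingleton := by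
  intro k hk k' hk'
  have hmul : (a - a') * (k - k') = 0 := by
    simp only [Set.mem_ofPred_eq] at hk hk'
    linear_combination hk - hk'
  rcases mul_eq_zero.mp hmul with ha | hk''
  · obtain rfl := sub_eq_zero.mp ha
    exact absurd (by simpa using hk) h
  · exact sub_eq_zero.mp hk''

lemma latinL_eq_affine (n : ℕ) (i j k : ZMod n) : latinL n i j k = i * k + (j - i) := by
  unfold latinL; ring

/-- Vertices outside `Q ∪ S` get the junk value `(0, 0)`. -/
def lineCoeffs {n : ℕ} : Vert n → ZMod n × ZMod n
  | .qv i j => (i.1, j - i.1)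
  | .sv m => (0, m)
  | _ => (0, 0)

lemma lineCoeffs_injOn (n : ℕ) : Set.InjOn (lineCoeffs (n := n)) (Qset n ∪ Sset n) := by
  rintro _ (⟨i, j, rfl⟩ | ⟨m, rfl⟩) _ (⟨i', j', rfl⟩ | ⟨m', rfl⟩) h <;>
    simp only [lineCoeffs, Prod.mk.injEq] at h
  · obtain ⟨hi, hj⟩ := h
    obtain rfl := Subtype.ext hi
    rw [sub_left_inj.mp hj]
  · exact absurd h.1 i.2
  · exact absurd h.1.symm i'.2
  · rw [h.2]

lemma neighborSet_inter_PlSet {n : ℕ} {l : ZMod n} {x : Vert n} (hx : x ∈ Qset n ∪ Sset n) :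
    (GraphG n).neighborSet x ∩ PlSet n l =
      layerGraph l fun k => (lineCoeffs x).1 * k + (lineCoeffs x).2 := by
  ext v
  rcases hx with ⟨i, j, rfl⟩ | ⟨m, rfl⟩ <;> cases v <;>
    simp [GraphG, rel, PlSet, layerGraph, lineCoeffs, latinL_eq_affine, eq_comm]

lemma square_adj_of_mem_neighborSet {V : Type*} {G : SimpleGraph V} {x u v : V}
    (hu : u ∈ G.neighborSet x) (hv : v ∈ G.neighborSet x) (huv : u ≠ v) : (square G).Adj u v :=
  ⟨huv, Or.inr ⟨x, hu.symm, hv⟩⟩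

theorem stmt_10_general (n : ℕ) (hn : n.Prime) (l : ZMod n) :
    (∀ x ∈ Qset n ∪ Sset n, ((GraphG n).neighborSet x ∩ PlSet n l).ncard = n) ∧
    (∀ x ∈ Qset n ∪ Sset n, ∀ u ∈ (GraphG n).neighborSet x ∩ PlSet n l,
      ∀ v ∈ (GraphG n).neighborSet x ∩ PlSet n l, u ≠ v → (square (GraphG n)).Adj u v) ∧
    (∀ x ∈ Qset n ∪ Sset n, ∀ y ∈ Qset n ∪ Sset n, x ≠ y →
      (((GraphG n).neighborSet x ∩ PlSet n l) ∩
        ((GraphG n).neighborSet y ∩ PlSet n l)).ncard ≤ 1) := by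
  have : Fact n.Prime := ⟨hn⟩
  refine ⟨fun x hx => ?_, fun x _ u hu v hv => square_adj_of_mem_neighborSet hu.1 hv.1,
    fun x hx y hy hxy => ?_⟩
  · rw [neighborSet_inter_PlSet hx, ncard_layerGraph]
  · rw [neighborSet_inter_PlSet hx, neighborSet_inter_PlSet hy]
    have hline : lineCoeffs x ≠ lineCoeffs y := fun h => hxy (lineCoeffs_injOn n hx hy h)
    have hsub := layerGraph_inter_subsingleton (l := l) (subsingleton_setOf_affine_eq hline)
    exact (Set.ncard_le_one hsub.finite).2 hsub

/-- for fixed `l`, consider the family `𝓕_l = {N_G(x) ∩ P^l : x ∈ Q ∪ S}`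
(of `n²` sets): each member has exactly `n` vertices and induces a complete graph `K_n`
in `G²`, and the members corresponding to distinct `x, y ∈ Q ∪ S` intersect in at most
one vertex (so the cliques are pairwise edge-disjoint). -/
theorem stmt_10 (n : ℕ) (hn : n.Prime) (hn3 : 3 ≤ n) (l : ZMod n) :
    (∀ x ∈ Qset n ∪ Sset n, ((GraphG n).neighborSet x ∩ PlSet n l).ncard = n) ∧
    (∀ x ∈ Qset n ∪ Sset n, ∀ u ∈ (GraphG n).neighborSet x ∩ PlSet n l,
      ∀ v ∈ (GraphG n).neighborSet x ∩ PlSet n l, u ≠ v → (square (GraphG n)).Adj u v) ∧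
    (∀ x ∈ Qset n ∪ Sset n, ∀ y ∈ Qset n ∪ Sset n, x ≠ y →
      (((GraphG n).neighborSet x ∩ PlSet n l) ∩
        ((GraphG n).neighborSet y ∩ PlSet n l)).ncard ≤ 1) :=
  stmt_10_general n hn l
end

section
/- For every integer M there exists a bipartite graph G such that χ_ℓ(G²) − χ(G²) > M, where G² is the square of G. In particular, there exists a bipartite graph G with χ_ℓ(G²) ≠ χ(G²), i.e., whose square is not chromatic-choosable. -/
open SimpleGraph

/-!
For a prime `n`, `G = GraphG n` is bipartite with sides `P` and `Q ∪ R ∪ S`. Two vertices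
`v_{k,m}^l`, `v_{k',m'}^{l'}` with `(k, l) ≠ (k', l')` always have a common neighbour in `G`: `s_m`
if `m = m'`, and otherwise some `w_{i,j}` (if `k ≠ k'`) or `u_{i,j}` (if `l ≠ l'`), found by
solving a linear system over the field `ZMod n`. Hence `P` spans in `G²` a complete multipartite
graph with `n²` parts of size `n`. Giving `v_{k,m}^l` the palette `[0, 2n² - 1)` minus the `m`-th
block of `2n` consecutive colours forces every part to use two colours, one colour too many, so
`χ_ℓ(G²) ≥ 2n² - 2n`. Colouring `v_{k,m}^l` by `(k, l)` and `Q_i`, `R_i` by `i` shows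
`χ(G²) ≤ n² + 2n`.
-/

open Finset

section ListColoring

variable {V W : Type*} {G : SimpleGraph V} {H : SimpleGraph W} {k : ℕ}

theorem Choosable.mono {k' : ℕ} (h : Choosable G k) (hk : k ≤ k') : Choosable G k' :=
  fun L hL => h L fun v => hk.trans (hL v)

theorem Choosable.of_copy (f : G.Copy H) (h : Choosable H k) : Choosable G k := by
  intro L hL
  have hf : Function.Injective f := f.injective
  obtain ⟨φ, hφL, hφ⟩ := h (Function.extend f L fun _ => range k) fun w => by
    by_cases hw : ∃ v, f v = w
    · obtain ⟨v, rfl⟩ := hw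
      rw [hf.extend_apply]
      exact hL v
    · rw [Function.extend_apply' _ _ _ hw, card_range]
  refine ⟨φ ∘ f, fun v => ?_, fun v w hvw => hφ (f.toHom.map_adj hvw)⟩
  simpa [hf.extend_apply] using hφL (f v)

theorem choosable_card [Fintype V] (G : SimpleGraph V) : Choosable G (Fintype.card V) := by
  classical
  intro L hL
  obtain ⟨φ, hφ, hφL⟩ := (all_card_le_biUnion_card_iff_exists_injective L).1 fun s => by
    obtain rfl | ⟨v, hv⟩ := s.eq_empty_or_nonempty
    · simp
    · exact s.card_le_univ.trans <| (hL v).trans <| card_le_card <| subset_biUnion_of_mem L hv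
  exact ⟨φ, hφL, fun v w hvw => hφ.ne hvw.ne⟩

theorem lt_listChromaticNumber [Finite V] (h : ¬ Choosable G k) :
    k < listChromaticNumber G := by
  have := Fintype.ofFinite V
  have hmem : listChromaticNumber G ∈ {k | Choosable G k} := Nat.sInf_mem ⟨_, choosable_card G⟩
  by_contra! hle
  exact h (Choosable.mono hmem hle)

/-- A part using a single colour `c` fails at its vertex indexed by `block c`. -/
theorem not_choosable_comap_fst_top {ι κ : Type*} [Fintype ι] [Nonempty κ] [DecidableEq κ]
    (P : Finset ℕ) (block : ℕ → κ) {b : ℕ} (hP : #P < 2 * Fintype.card ι)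
    (hblock : ∀ a, #{c ∈ P | block c = a} ≤ b) :
    ¬ Choosable ((⊤ : SimpleGraph ι).comap (Prod.fst : ι × κ → ι)) (#P - b) := by
  intro h
  obtain ⟨φ, hφL, hφ⟩ := h (fun x => {c ∈ P | ¬ block c = x.2}) fun x => by
    have := card_filter_add_card_filter_not (s := P) (block · = x.2)
    have := hblock x.2
    omega
  simp only [mem_filter] at hφL
  let a₀ : κ := Classical.arbitrary κ
  let twoColours : ι × Bool → ℕ := fun x =>
    if x.2 then φ (x.1, block (φ (x.1, a₀))) else φ (x.1, a₀)
  have hne (p : ι) : φ (p, block (φ (p, a₀))) ≠ φ (p, a₀) := fun he =>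
    (hφL (p, block (φ (p, a₀)))).2 (congrArg block he)
  have hinj : Set.InjOn twoColours (univ : Finset (ι × Bool)) := by
    rintro ⟨p, x⟩ - ⟨q, y⟩ - hxy
    by_cases hpq : p = q
    · subst hpq
      cases x <;> cases y
      · rfl
      · exact absurd hxy.symm (hne p)
      · exact absurd hxy (hne p)
      · rfl
    · exact absurd hxy <| by cases x <;> cases y <;> exact hφ hpq
  have := card_le_card_of_injOn twoColours (fun x _ => by
    simp only [twoColours]; split_ifs <;> exact (hφL _).1) hinj
  simp only [card_univ, Fintype.card_prod, Fintype.card_bool] at this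
  omega

end ListColoring

theorem Finset.card_filter_div_eq_le (s : Finset ℕ) {d : ℕ} (hd : 0 < d) (q : ℕ) :
    #{c ∈ s | c / d = q} ≤ d :=
  calc #{c ∈ s | c / d = q} ≤ #(Ico (q * d) (q * d + d)) := card_le_card fun c hc => by
        rw [mem_filter, Nat.div_eq_iff hd] at hc
        rw [mem_Ico]
        omega
    _ = d := by simp

namespace Vert

variable {n : ℕ}

instance [NeZero n] : Finite (Vert n) := by
  let toSum : Vert n → (ZMod n × ZMod n × ZMod n) ⊕ ({x : ZMod n // x ≠ 0} × ZMod n) ⊕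
      ({x : ZMod n // x ≠ 0} × ZMod n) ⊕ ZMod n
    | pv k m l => .inl (k, m, l)
    | qv i j => .inr (.inl (i, j))
    | rv i j => .inr (.inr (.inl (i, j)))
    | sv m => .inr (.inr (.inr m))
  refine Finite.of_injective toSum ?_
  rintro (_ | _ | _ | _) (_ | _ | _ | _) h <;> simp_all [toSum]

theorem exists_latinL_eq [Fact n.Prime] {a a' m m' : ZMod n} (ha : a ≠ a') (hm : m ≠ m') :
    ∃ (i : {x : ZMod n // x ≠ 0}) (j : ZMod n), m = latinL n i j a ∧ m' = latinL n i j a' := by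
  have ha' : a - a' ≠ 0 := sub_ne_zero.mpr ha
  refine ⟨⟨(m - m') / (a - a'), div_ne_zero (sub_ne_zero.mpr hm) ha'⟩,
    m - (m - m') / (a - a') * (a - 1), by simp [latinL], ?_⟩
  simp only [latinL]
  linear_combination div_mul_cancel₀ (m - m') ha'

theorem not_square_adj_pv {k m m' l : ZMod n} :
    ¬ (square (GraphG n)).Adj (pv k m l) (pv k m' l) := by
  rintro ⟨hne, hadj | ⟨z, h₁, h₂⟩⟩
  · simp [GraphG, rel] at hadj
  · cases z <;> simp_all [GraphG, rel]

theorem not_square_adj_qv {i : {x : ZMod n // x ≠ 0}} {j j' : ZMod n} :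
    ¬ (square (GraphG n)).Adj (qv i j) (qv i j') := by
  rintro ⟨hne, hadj | ⟨z, h₁, h₂⟩⟩
  · simp [GraphG, rel] at hadj
  · cases z <;> simp_all [GraphG, rel, latinL]

theorem not_square_adj_rv {i : {x : ZMod n // x ≠ 0}} {j j' : ZMod n} :
    ¬ (square (GraphG n)).Adj (rv i j) (rv i j') := by
  rintro ⟨hne, hadj | ⟨z, h₁, h₂⟩⟩
  · simp [GraphG, rel] at hadj
  · cases z <;> simp_all [GraphG, rel, latinL]

theorem not_square_adj_sv {m m' : ZMod n} : ¬ (square (GraphG n)).Adj (sv m) (sv m') := by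
  rintro ⟨hne, hadj | ⟨z, h₁, h₂⟩⟩
  · simp [GraphG, rel] at hadj
  · cases z <;> simp_all [GraphG, rel]

-- `S` takes the colour of the nonexistent class `Q_0`.
def squareColor : Vert n → (ZMod n × ZMod n) ⊕ ZMod n ⊕ ZMod n
  | pv k _ l => .inl (k, l)
  | qv i _ => .inr (.inl i)
  | rv i _ => .inr (.inr i)
  | sv _ => .inr (.inl 0)

theorem square_graphG_colorable [NeZero n] : (square (GraphG n)).Colorable (n ^ 2 + 2 * n) := by
  have hcol : (square (GraphG n)).Coloring ((ZMod n × ZMod n) ⊕ ZMod n ⊕ ZMod n) :=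
    Coloring.mk squareColor fun {u v} huv hc => by
      rcases u with ⟨k, m, l⟩ | ⟨i, j⟩ | ⟨i, j⟩ | m <;>
        rcases v with ⟨k', m', l'⟩ | ⟨i', j'⟩ | ⟨i', j'⟩ | m' <;>
        simp only [squareColor, Sum.inl.injEq, Sum.inr.injEq, Prod.mk.injEq, reduceCtorEq,
          ← Subtype.ext_iff] at hc
      · obtain ⟨rfl, rfl⟩ := hc
        exact not_square_adj_pv huv
      · subst hc
        exact not_square_adj_qv huv
      · exact i.2 hc
      · subst hc
        exact not_square_adj_rv huv
      · exact i'.2 hc.symm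
      · exact not_square_adj_sv huv
  simpa [ZMod.card, sq, two_mul, add_assoc] using hcol.colorable

theorem square_adj_pv [Fact n.Prime] {k m l k' m' l' : ZMod n} (h : (k, l) ≠ (k', l')) :
    (square (GraphG n)).Adj (pv k m l) (pv k' m' l') := by
  refine ⟨by rintro ⟨⟩; exact h rfl, Or.inr ?_⟩
  obtain rfl | hm := eq_or_ne m m'
  · exact ⟨sv m, Or.inr rfl, Or.inl rfl⟩
  by_cases hk : k = k'
  · subst hk
    obtain ⟨i, j, h₁, h₂⟩ := exists_latinL_eq (by simpa using h) hm
    exact ⟨rv i j, Or.inr h₁, Or.inl h₂⟩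
  · obtain ⟨i, j, h₁, h₂⟩ := exists_latinL_eq hk hm
    exact ⟨qv i j, Or.inr h₁, Or.inl h₂⟩

def pvCopy [Fact n.Prime] :
    ((⊤ : SimpleGraph (ZMod n × ZMod n)).comap (Prod.fst : (ZMod n × ZMod n) × ZMod n → _)).Copy
      (square (GraphG n)) :=
  ⟨⟨fun x => pv x.1.1 x.2 x.1.2, fun h => square_adj_pv h⟩,
    by rintro ⟨⟨⟩, _⟩ ⟨⟨⟩, _⟩ h; simp_all⟩

theorem lt_listChromaticNumber_square_graphG [Fact n.Prime] :
    2 * n ^ 2 - 1 - 2 * n < listChromaticNumber (square (GraphG n)) := by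
  have hn : 0 < n := (Fact.out : n.Prime).pos
  refine lt_listChromaticNumber fun h => ?_
  refine not_choosable_comap_fst_top (range (2 * n ^ 2 - 1))
    (fun c => ((c / (2 * n) : ℕ) : ZMod n)) ?_ (fun a => ?_) (by simpa using h.of_copy pvCopy)
  · simp only [card_range, Fintype.card_prod, ZMod.card]
    have : 0 < n * n := Nat.mul_pos hn hn
    rw [sq]
    omega
  · refine (card_le_card fun c hc => ?_).trans
      ((range (2 * n ^ 2 - 1)).card_filter_div_eq_le (by omega) a.val)
    rw [mem_filter, mem_range] at hc ⊢
    refine ⟨hc.1, ?_⟩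
    rw [← hc.2, ZMod.val_cast_of_lt]
    rw [Nat.div_lt_iff_lt_mul (by omega), mul_left_comm, ← sq]
    omega

end Vert

theorem graphG_colorable_two (n : ℕ) : (GraphG n).Colorable 2 := by
  have hcol : (GraphG n).Coloring Bool :=
    Coloring.mk (fun | .pv .. => true | _ => false) fun {u v} huv hc => by
      cases u <;> cases v <;> simp_all [GraphG, rel]
  simpa using hcol.colorable

theorem exists_colorable_two_lt_listChromaticNumber_square_sub (M : ℤ) :
    ∃ (V : Type) (G : SimpleGraph V), G.Colorable 2 ∧
      M < (listChromaticNumber (square G) : ℤ) - ((square G).chromaticNumber.toNat : ℤ) := by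
  obtain ⟨n, hn, hp⟩ := Nat.exists_infinite_primes (M.toNat + 5)
  have := Fact.mk hp
  refine ⟨Vert n, GraphG n, graphG_colorable_two n, ?_⟩
  have hℓ : 2 * n ^ 2 ≤ listChromaticNumber (square (GraphG n)) + 2 * n + 1 := by
    have := Vert.lt_listChromaticNumber_square_graphG (n := n)
    omega
  have hχ : (square (GraphG n)).chromaticNumber.toNat ≤ n ^ 2 + 2 * n :=
    ENat.toNat_le_of_le_natCast Vert.square_graphG_colorable.chromaticNumber_le
  have hM := Int.self_le_toNat M
  zify at hℓ hχ hn
  nlinarith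

/-- for every integer `M` there is a bipartite (2-colorable) graph `G` with
`χ_ℓ(G²) - χ(G²) > M`; in particular there is a bipartite graph `G` whose square is
not chromatic-choosable, i.e. `χ_ℓ(G²) ≠ χ(G²)`. -/
theorem stmt_19 :
    (∀ M : ℤ, ∃ (V : Type) (G : SimpleGraph V), G.Colorable 2 ∧
      M < (listChromaticNumber (square G) : ℤ) -
        ((square G).chromaticNumber.toNat : ℤ)) ∧
    ∃ (V : Type) (G : SimpleGraph V), G.Colorable 2 ∧
      (listChromaticNumber (square G) : ℕ∞) ≠ (square G).chromaticNumber := by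
  refine ⟨exists_colorable_two_lt_listChromaticNumber_square_sub, ?_⟩
  obtain ⟨V, G, hG, hgap⟩ := exists_colorable_two_lt_listChromaticNumber_square_sub 0
  refine ⟨V, G, hG, fun he => ?_⟩
  rw [← he, ENat.toNat_natCast, sub_self] at hgap
  exact hgap.false
end
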